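/- Let Q : M_{3×3}(ℝ) → ℝ be a quadratic form such that Q(X) = Q(sym X) for all X, and suppose there are constants 0 < c ≤ C with c‖S‖_F² ≤ Q(S) ≤ C‖S‖_F² for all symmetric S. Let m ∈ M_{3×3}(ℝ) be symmetric, and let d ∈ ℝ³ be any minimizer of the function c' ↦ Q(m + c'⊗e₃) over c' ∈ ℝ³. Then |d| ≤ √2 (√(C/c) + 1) ‖m‖_F. -/
import Mathlib


open Matrix

attribute [local instance] Matrix.frobeniusNormedAddCommGroup

/-- `c ⊗ e₃`: the `3×3` matrix whose third column is `c` and other columns vanish. -/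
def tensorE3 (c : Fin 3 → ℝ) : Matrix (Fin 3) (Fin 3) ℝ :=
  Matrix.of fun i j => if j = 2 then c i else 0

/-- The symmetric part `sym X = (X + Xᵀ)/2` of a matrix. -/
noncomputable def msym (X : Matrix (Fin 3) (Fin 3) ℝ) : Matrix (Fin 3) (Fin 3) ℝ :=
  (2 : ℝ)⁻¹ • (X + Xᵀ)

lemma norm_sq_frobenius (A : Matrix (Fin 3) (Fin 3) ℝ) :
    ‖A‖ ^ 2 = ∑ i, ∑ j, (A i j) ^ 2 := by
  rw [Matrix.frobenius_norm_def]
  rw [← Real.rpow_natCast ((∑ i, ∑ j, ‖A i j‖ ^ (2 : ℝ)) ^ (1 / 2 : ℝ)) 2,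
    ← Real.rpow_mul (by positivity)]
  norm_num

lemma msym_transpose (X : Matrix (Fin 3) (Fin 3) ℝ) : (msym X)ᵀ = msym X := by
  simp [msym, Matrix.transpose_add, add_comm]

/-- **Bound (`Linftyboundond`) of Section 4 of the paper.** For a quadratic form `Q` on
`M₃ₓ₃` depending only on the symmetric part and elliptic on symmetric matrices, any
minimizer `d` of `c' ↦ Q(m + c'⊗e₃)` (for symmetric `m`) satisfies
`|d| ≤ √2(√(C/c) + 1)‖m‖_F`. -/
theorem stmt16 (Q : QuadraticForm ℝ (Matrix (Fin 3) (Fin 3) ℝ))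
    (hQsym : ∀ X, Q X = Q (msym X))
    (c C : ℝ) (hc : 0 < c) (hcC : c ≤ C)
    (hell : ∀ S : Matrix (Fin 3) (Fin 3) ℝ, Sᵀ = S →
      c * ‖S‖ ^ 2 ≤ Q S ∧ Q S ≤ C * ‖S‖ ^ 2)
    (m : Matrix (Fin 3) (Fin 3) ℝ) (hm : mᵀ = m)
    (d : Fin 3 → ℝ)
    (hd : ∀ c' : Fin 3 → ℝ, Q (m + tensorE3 d) ≤ Q (m + tensorE3 c')) :
    Real.sqrt (∑ i, d i ^ 2) ≤ Real.sqrt 2 * (Real.sqrt (C / c) + 1) * ‖m‖ := by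
  set D := tensorE3 d with hD
  set S := msym (m + D) with hS
  have hSsym : Sᵀ = S := msym_transpose _
  have ht0 : tensorE3 (0 : Fin 3 → ℝ) = 0 := by
    ext i j; simp [tensorE3]
  have hQm : Q (m + D) ≤ Q m := by
    have := hd 0
    rwa [ht0, add_zero] at this
  have h1 : c * ‖S‖ ^ 2 ≤ C * ‖m‖ ^ 2 := by
    calc c * ‖S‖ ^ 2 ≤ Q S := (hell S hSsym).1
      _ = Q (m + D) := (hQsym (m + D)).symm
      _ ≤ Q m := hQm
      _ ≤ C * ‖m‖ ^ 2 := (hell m hm).2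
  have hSle : ‖S‖ ≤ Real.sqrt (C / c) * ‖m‖ := by
    have h2 : ‖S‖ ^ 2 ≤ (C / c) * ‖m‖ ^ 2 := by
      rw [div_mul_eq_mul_div, le_div_iff₀ hc]
      nlinarith
    calc ‖S‖ = Real.sqrt (‖S‖ ^ 2) := by
          rw [Real.sqrt_sq (norm_nonneg _)]
      _ ≤ Real.sqrt ((C / c) * ‖m‖ ^ 2) := Real.sqrt_le_sqrt h2
      _ = Real.sqrt (C / c) * ‖m‖ := by
          rw [Real.sqrt_mul (div_nonneg (hc.le.trans hcC) hc.le) _, Real.sqrt_sq (norm_nonneg _)]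
  have hmsm : msym m = m := by
    simp [msym, hm]; ext i j; simp; ring
  have hSD : msym D = S - m := by
    rw [hS]
    have : msym (m + D) = msym m + msym D := by
      simp [msym, Matrix.transpose_add, smul_add]; abel
    rw [this, hmsm]; abel
  have hDle : ‖msym D‖ ≤ Real.sqrt (C / c) * ‖m‖ + ‖m‖ := by
    rw [hSD]
    calc ‖S - m‖ ≤ ‖S‖ + ‖m‖ := norm_sub_le _ _
      _ ≤ Real.sqrt (C / c) * ‖m‖ + ‖m‖ := by linarith
  have hkey : ∑ i, d i ^ 2 ≤ 2 * ‖msym D‖ ^ 2 := by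
    rw [norm_sq_frobenius]
    have : ∀ i j, msym D i j =
        ((if j = 2 then d i else 0) + (if i = 2 then d j else 0)) / 2 := by
      intro i j
      simp [msym, hD, tensorE3, Matrix.transpose_apply, Matrix.add_apply]
      ring
    simp only [this]
    rw [Fin.sum_univ_three]
    simp only [Fin.sum_univ_three]
    norm_num [Fin.ext_iff]
    nlinarith [sq_nonneg (d 2)]
  have hfin : Real.sqrt (∑ i, d i ^ 2) ≤ Real.sqrt 2 * ‖msym D‖ := by
    calc Real.sqrt (∑ i, d i ^ 2) ≤ Real.sqrt (2 * ‖msym D‖ ^ 2) :=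
          Real.sqrt_le_sqrt hkey
      _ = Real.sqrt 2 * ‖msym D‖ := by
          rw [Real.sqrt_mul (by norm_num), Real.sqrt_sq (norm_nonneg _)]
  calc Real.sqrt (∑ i, d i ^ 2) ≤ Real.sqrt 2 * ‖msym D‖ := hfin
    _ ≤ Real.sqrt 2 * (Real.sqrt (C / c) * ‖m‖ + ‖m‖) := by
        apply mul_le_mul_of_nonneg_left hDle (Real.sqrt_nonneg 2)
    _ = Real.sqrt 2 * (Real.sqrt (C / c) + 1) * ‖m‖ := by ring
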